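/- Let η ∈ L²(ℝ³×ℝ³) be a symmetric real kernel with ‖η‖ ≤ 1/2, and define sinh_η = Σ_{k≥0} η^{(2k+1)}/(2k+1)!, cosh_η = Σ_{k≥0} η^{(2k)}/(2k)! (with η^{(0)} = id), p_η = sinh_η − η, r_η = cosh_η − id. If moreover ‖η(x,·)‖ ≤ K φ(x) pointwise for a bounded nonnegative φ and constant K, then p_η and r_η are Hilbert–Schmidt with ‖p_η‖_{HS}, ‖r_η‖_{HS} ≤ C‖η‖_{HS}², and their kernels satisfy |p_η(x,y)|, |r_η(x,y)| ≤ C K² φ(x) φ(y) almost everywhere, with C a universal constant. -/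

import Mathlib

/-!
Cauchy–Schwarz in the middle variable gives `|η⁽ⁿ⁺¹⁾(x,y)| ≤ ‖η(x,·)‖₂ ‖η⁽ⁿ⁾(·,y)‖₂`. Integrating
its square in `x` gives `‖η⁽ⁿ⁺¹⁾(·,y)‖₂ ≤ ‖η‖_HS ‖η⁽ⁿ⁾(·,y)‖₂`, and integrating once more in `y`
gives `‖η⁽ⁿ⁺¹⁾‖_HS ≤ ‖η‖_HS ‖η⁽ⁿ⁾‖_HS`. Iterating, `‖η⁽ⁿ⁾‖_HS ≤ ‖η‖_HS^n` for `n ≥ 1` and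
`|η⁽ⁿ⁺²⁾(x,y)| ≤ ‖η‖_HS^n ‖η(x,·)‖₂ ‖η(·,y)‖₂ ≤ ‖η‖_HS^n K² φ(x) φ(y)`, symmetry turning the
column norm into a row norm. Since `‖η‖_HS ≤ 1/2`, both series are dominated termwise, in `L²`
and pointwise, by geometric series of ratio `1/2`; the factorials are only used through `m! ≥ 1`.
-/

open MeasureTheory Filter Topology Finset
open scoped ENNReal

namespace MeasureTheory

section Series

variable {α E : Type*} [MeasurableSpace α] {μ : Measure α} [NormedAddCommGroup E] [CompleteSpace E]
  {p : ℝ≥0∞} {F : ℕ → α → E}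

theorem ae_tendsto_sum_range_of_tsum_eLpNorm_ne_top (hp : 1 ≤ p)
    (hF : ∀ n, AEStronglyMeasurable (F n) μ) (hsum : ∑' n, eLpNorm (F n) p μ ≠ ∞) :
    ∀ᵐ x ∂μ, Tendsto (fun N => ∑ n ∈ range N, F n x) atTop (𝓝 (∑' n, F n x)) := by
  filter_upwards [summable_norm_of_tsum_eLpNorm_ne_top hp hF hsum] with x hx
  exact hx.of_norm.hasSum.tendsto_sum_nat

theorem eLpNorm_tsum_le (hp : 1 ≤ p) (hF : ∀ n, AEStronglyMeasurable (F n) μ)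
    (hsum : ∑' n, eLpNorm (F n) p μ ≠ ∞) :
    eLpNorm (fun x => ∑' n, F n x) p μ ≤ ∑' n, eLpNorm (F n) p μ := by
  refine Lp.eLpNorm_le_of_ae_tendsto (Eventually.of_forall fun N => ?_)
    (fun _ => Finset.aestronglyMeasurable_fun_sum _ fun n _ => hF n)
    (ae_tendsto_sum_range_of_tsum_eLpNorm_ne_top hp hF hsum)
  calc eLpNorm (fun x => ∑ n ∈ range N, F n x) p μ = eLpNorm (∑ n ∈ range N, F n) p μ := by
        rw [Finset.sum_fn]
    _ ≤ ∑ n ∈ range N, eLpNorm (F n) p μ := eLpNorm_sum_le (fun n _ => hF n) hp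
    _ ≤ ∑' n, eLpNorm (F n) p μ := ENNReal.sum_le_tsum _

theorem memLp_tsum (hp : 1 ≤ p) (hF : ∀ n, AEStronglyMeasurable (F n) μ)
    (hsum : ∑' n, eLpNorm (F n) p μ ≠ ∞) : MemLp (fun x => ∑' n, F n x) p μ :=
  ⟨aestronglyMeasurable_of_tendsto_ae atTop
      (fun _ => Finset.aestronglyMeasurable_fun_sum _ fun n _ => hF n)
      (ae_tendsto_sum_range_of_tsum_eLpNorm_ne_top hp hF hsum),
    (eLpNorm_tsum_le hp hF hsum).trans_lt hsum.lt_top⟩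

end Series

theorem eLpNorm_two_sq {α E : Type*} [MeasurableSpace α] [NormedAddCommGroup E] {μ : Measure α}
    (f : α → E) : eLpNorm f 2 μ ^ 2 = ∫⁻ x, ‖f x‖ₑ ^ 2 ∂μ := by
  simpa using eLpNorm_nnreal_pow_eq_lintegral (f := f) (μ := μ) (p := 2) two_ne_zero

theorem enorm_integral_mul_le_eLpNorm_mul_eLpNorm {α : Type*} [MeasurableSpace α] {μ : Measure α}
    {f g : α → ℝ} (hf : AEStronglyMeasurable f μ) (hg : AEStronglyMeasurable g μ) :
    ‖∫ x, f x * g x ∂μ‖ₑ ≤ eLpNorm f 2 μ * eLpNorm g 2 μ := by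
  calc ‖∫ x, f x * g x ∂μ‖ₑ ≤ ∫⁻ x, ‖f x * g x‖ₑ ∂μ := enorm_integral_le_lintegral_enorm _
    _ = eLpNorm (fun x => f x * g x) 1 μ := eLpNorm_one_eq_lintegral_enorm.symm
    _ ≤ 1 * eLpNorm f 2 μ * eLpNorm g 2 μ :=
        eLpNorm_le_eLpNorm_mul_eLpNorm'_of_norm hf hg (· * ·) 1
          (ae_of_all _ fun x => by simp [norm_mul])
    _ = _ := by rw [one_mul]

section KernelProduct

variable {X Y Z : Type*} [MeasurableSpace X] [MeasurableSpace Y] [MeasurableSpace Z]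
  {μ : Measure X} {ν : Measure Y} {ρ : Measure Z} [SFinite ν]
  {f : X × Y → ℝ} {g : Y × Z → ℝ} {h : X × Z → ℝ}

theorem lintegral_eLpNorm_row_sq (hf : AEStronglyMeasurable f (μ.prod ν)) :
    ∫⁻ x, eLpNorm (fun y => f (x, y)) 2 ν ^ 2 ∂μ = eLpNorm f 2 (μ.prod ν) ^ 2 := by
  simp only [eLpNorm_two_sq]
  exact (lintegral_prod _ (hf.enorm.pow_const 2)).symm

theorem lintegral_eLpNorm_col_sq [SFinite μ] (hf : AEStronglyMeasurable f (μ.prod ν)) :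
    ∫⁻ y, eLpNorm (fun x => f (x, y)) 2 μ ^ 2 ∂ν = eLpNorm f 2 (μ.prod ν) ^ 2 := by
  simp only [eLpNorm_two_sq]
  exact (lintegral_prod_symm _ (hf.enorm.pow_const 2)).symm

theorem aemeasurable_eLpNorm_row_sq (hf : AEStronglyMeasurable f (μ.prod ν)) :
    AEMeasurable (fun x => eLpNorm (fun y => f (x, y)) 2 ν ^ 2) μ := by
  simpa only [eLpNorm_two_sq] using (hf.enorm.pow_const 2).lintegral_prod_right'

theorem aemeasurable_eLpNorm_col_sq [SFinite μ] (hf : AEStronglyMeasurable f (μ.prod ν)) :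
    AEMeasurable (fun y => eLpNorm (fun x => f (x, y)) 2 μ ^ 2) ν := by
  simpa only [eLpNorm_two_sq] using (hf.enorm.pow_const 2).lintegral_prod_left'

theorem ae_enorm_integral_mul_le [SFinite ρ] (hf : AEStronglyMeasurable f (μ.prod ν))
    (hg : AEStronglyMeasurable g (ν.prod ρ)) :
    ∀ᵐ z ∂μ.prod ρ, ‖∫ y, f (z.1, y) * g (y, z.2) ∂ν‖ₑ ≤
      eLpNorm (fun y => f (z.1, y)) 2 ν * eLpNorm (fun y => g (y, z.2)) 2 ν := by
  filter_upwards [Measure.quasiMeasurePreserving_fst.ae hf.prodMk_left,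
    Measure.quasiMeasurePreserving_snd.ae hg.prodMk_right] with z hfz hgz
  exact enorm_integral_mul_le_eLpNorm_mul_eLpNorm hfz hgz

theorem ae_eLpNorm_col_le_of_eq_integral [SFinite μ] [SFinite ρ]
    (hf : AEStronglyMeasurable f (μ.prod ν)) (hg : AEStronglyMeasurable g (ν.prod ρ))
    (hh : ∀ x z, h (x, z) = ∫ y, f (x, y) * g (y, z) ∂ν) :
    ∀ᵐ z ∂ρ, eLpNorm (fun x => h (x, z)) 2 μ ≤
      eLpNorm f 2 (μ.prod ν) * eLpNorm (fun y => g (y, z)) 2 ν := by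
  have hpt := Measure.ae_ae_of_ae_prod
    (Measure.measurePreserving_swap.quasiMeasurePreserving.ae (ae_enorm_integral_mul_le hf hg))
  filter_upwards [hpt] with z hz
  rw [← ENNReal.pow_le_pow_left_iff two_ne_zero, mul_pow, eLpNorm_two_sq,
    ← lintegral_eLpNorm_row_sq hf, ← lintegral_mul_const'' _ (aemeasurable_eLpNorm_row_sq hf)]
  refine lintegral_mono_ae (hz.mono fun x hx => ?_)
  rw [← mul_pow, hh]
  gcongr
  exact hx

theorem eLpNorm_le_mul_of_eq_integral [SFinite μ] [SFinite ρ]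
    (hf : AEStronglyMeasurable f (μ.prod ν)) (hg : AEStronglyMeasurable g (ν.prod ρ))
    (hhm : AEStronglyMeasurable h (μ.prod ρ))
    (hh : ∀ x z, h (x, z) = ∫ y, f (x, y) * g (y, z) ∂ν) :
    eLpNorm h 2 (μ.prod ρ) ≤ eLpNorm f 2 (μ.prod ν) * eLpNorm g 2 (ν.prod ρ) := by
  rw [← ENNReal.pow_le_pow_left_iff two_ne_zero, mul_pow, ← lintegral_eLpNorm_col_sq hhm,
    ← lintegral_eLpNorm_col_sq hg, ← lintegral_const_mul'' _ (aemeasurable_eLpNorm_col_sq hg)]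
  refine lintegral_mono_ae ((ae_eLpNorm_col_le_of_eq_integral hf hg hh).mono fun z hz => ?_)
  rw [← mul_pow]
  gcongr

end KernelProduct

section Iterates

variable {X : Type*} [MeasurableSpace X] {μ : Measure X} [SFinite μ] {η : X × X → ℝ}
  {k : ℕ → X × X → ℝ}

theorem eLpNorm_iterate_le (hk : ∀ n, AEStronglyMeasurable (k n) (μ.prod μ)) (hk1 : k 1 = η)
    (hrec : ∀ n x y, k (n + 1) (x, y) = ∫ z, η (x, z) * k n (z, y) ∂μ) (n : ℕ) :
    eLpNorm (k (n + 1)) 2 (μ.prod μ) ≤ eLpNorm η 2 (μ.prod μ) ^ (n + 1) := by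
  induction n with
  | zero => rw [hk1, zero_add, pow_one]
  | succ n ih =>
    calc eLpNorm (k (n + 2)) 2 (μ.prod μ)
        ≤ eLpNorm η 2 (μ.prod μ) * eLpNorm (k (n + 1)) 2 (μ.prod μ) :=
          eLpNorm_le_mul_of_eq_integral (hk1 ▸ hk 1) (hk (n + 1)) (hk (n + 2)) (hrec (n + 1))
      _ ≤ eLpNorm η 2 (μ.prod μ) * eLpNorm η 2 (μ.prod μ) ^ (n + 1) := by gcongr
      _ = eLpNorm η 2 (μ.prod μ) ^ (n + 2) := (pow_succ' _ _).symm

theorem ae_eLpNorm_col_iterate_le (hk : ∀ n, AEStronglyMeasurable (k n) (μ.prod μ))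
    (hk1 : k 1 = η) (hrec : ∀ n x y, k (n + 1) (x, y) = ∫ z, η (x, z) * k n (z, y) ∂μ) :
    ∀ᵐ y ∂μ, ∀ n, eLpNorm (fun x => k (n + 1) (x, y)) 2 μ ≤
      eLpNorm η 2 (μ.prod μ) ^ n * eLpNorm (fun x => η (x, y)) 2 μ := by
  filter_upwards [ae_all_iff.2 fun n =>
    ae_eLpNorm_col_le_of_eq_integral (hk1 ▸ hk 1) (hk n) (hrec n)] with y hy n
  induction n with
  | zero => rw [hk1, pow_zero, one_mul]
  | succ n ih =>
    calc eLpNorm (fun x => k (n + 2) (x, y)) 2 μ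
        ≤ eLpNorm η 2 (μ.prod μ) * eLpNorm (fun x => k (n + 1) (x, y)) 2 μ := hy (n + 1)
      _ ≤ eLpNorm η 2 (μ.prod μ) *
          (eLpNorm η 2 (μ.prod μ) ^ n * eLpNorm (fun x => η (x, y)) 2 μ) := by gcongr
      _ = _ := by rw [pow_succ', mul_assoc]

theorem ae_enorm_iterate_le (hk : ∀ n, AEStronglyMeasurable (k n) (μ.prod μ))
    (hk1 : k 1 = η) (hrec : ∀ n x y, k (n + 1) (x, y) = ∫ z, η (x, z) * k n (z, y) ∂μ) :
    ∀ᵐ z ∂μ.prod μ, ∀ n, ‖k (n + 2) z‖ₑ ≤ eLpNorm η 2 (μ.prod μ) ^ n *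
      (eLpNorm (fun y => η (z.1, y)) 2 μ * eLpNorm (fun x => η (x, z.2)) 2 μ) := by
  filter_upwards [ae_all_iff.2 fun n => ae_enorm_integral_mul_le (hk1 ▸ hk 1) (hk (n + 1)),
    Measure.quasiMeasurePreserving_snd.ae (ae_eLpNorm_col_iterate_le hk hk1 hrec)]
    with z hz hcol n
  calc ‖k (n + 2) z‖ₑ
      ≤ eLpNorm (fun y => η (z.1, y)) 2 μ * eLpNorm (fun y => k (n + 1) (y, z.2)) 2 μ := by
        have h := hz n
        rw [← hrec] at h
        exact h
    _ ≤ eLpNorm (fun y => η (z.1, y)) 2 μ *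
        (eLpNorm η 2 (μ.prod μ) ^ n * eLpNorm (fun x => η (x, z.2)) 2 μ) := by
        gcongr
        exact hcol n
    _ = _ := by ring

theorem ae_enorm_iterate_le_of_row_le (hk : ∀ n, AEStronglyMeasurable (k n) (μ.prod μ))
    (hk1 : k 1 = η) (hrec : ∀ n x y, k (n + 1) (x, y) = ∫ z, η (x, z) * k n (z, y) ∂μ)
    (hsymm : ∀ x y, η (x, y) = η (y, x)) {R : X → ℝ≥0∞}
    (hrow : ∀ x, eLpNorm (fun y => η (x, y)) 2 μ ≤ R x) :
    ∀ᵐ z ∂μ.prod μ, ∀ n, ‖k (n + 2) z‖ₑ ≤ eLpNorm η 2 (μ.prod μ) ^ n * (R z.1 * R z.2) := by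
  filter_upwards [ae_enorm_iterate_le hk hk1 hrec] with z hz n
  have hcol : eLpNorm (fun x => η (x, z.2)) 2 μ = eLpNorm (fun y => η (z.2, y)) 2 μ :=
    congrArg (eLpNorm · 2 μ) (funext fun x => hsymm x z.2)
  refine (hz n).trans ?_
  rw [hcol]
  gcongr <;> exact hrow _

end Iterates

end MeasureTheory

theorem ENNReal.pow_le_inv_two_pow {a : ℝ≥0∞} (ha : a ≤ 2⁻¹) {j m : ℕ} (h : j ≤ m) :
    a ^ m ≤ 2⁻¹ ^ j :=
  calc a ^ m ≤ a ^ j := pow_le_pow_right_of_le_one' (ha.trans (by norm_num)) h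
    _ ≤ 2⁻¹ ^ j := by gcongr

theorem ENNReal.tsum_inv_two_pow_mul (c : ℝ≥0∞) : ∑' j : ℕ, 2⁻¹ ^ j * c = 2 * c := by
  rw [ENNReal.tsum_mul_right, ENNReal.tsum_geometric, ENNReal.one_sub_inv_two, inv_inv]

theorem enorm_div_factorial_le (x : ℝ) (m : ℕ) : ‖x / m.factorial‖ₑ ≤ ‖x‖ₑ := by
  rw [← ofReal_norm, ← ofReal_norm, norm_div]
  refine ENNReal.ofReal_le_ofReal (div_le_self (norm_nonneg _) ?_)
  rw [Real.norm_natCast, Nat.one_le_cast]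
  exact m.factorial_pos

section DivFactorial

variable {α : Type*} [MeasurableSpace α] {μ : Measure α}

theorem tsum_div_factorial_bounds {g : ℕ → α → ℝ} {a : ℝ≥0∞} {B : α → ℝ≥0∞} (n : ℕ → ℕ)
    (hn : ∀ j, j + 2 ≤ n j) (ha : a ≤ 2⁻¹) (hg : ∀ k, AEStronglyMeasurable (g k) μ)
    (hL2 : ∀ k, eLpNorm (g (k + 2)) 2 μ ≤ a ^ (k + 2))
    (hpt : ∀ᵐ x ∂μ, ∀ k, ‖g (k + 2) x‖ₑ ≤ a ^ k * B x) :
    MemLp (fun x => ∑' j, g (n j) x / (n j).factorial) 2 μ ∧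
      eLpNorm (fun x => ∑' j, g (n j) x / (n j).factorial) 2 μ ≤ 2 * a ^ 2 ∧
      ∀ᵐ x ∂μ, ‖∑' j, g (n j) x / (n j).factorial‖ₑ ≤ 2 * B x := by
  have ha_top : a ≠ ∞ := ne_top_of_le_ne_top (by simp) ha
  have hn' : ∀ j, n j - 2 + 2 = n j := fun j => by have := hn j; omega
  have hdecay : ∀ j, a ^ (n j - 2) ≤ 2⁻¹ ^ j := fun j =>
    ENNReal.pow_le_inv_two_pow ha (by have := hn j; omega)
  have hterm : ∀ j, AEStronglyMeasurable (fun x => g (n j) x / (n j).factorial) μ := fun j => by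
    have := hg (n j)
    fun_prop
  have hL2' : ∀ j, eLpNorm (fun x => g (n j) x / (n j).factorial) 2 μ ≤ 2⁻¹ ^ j * a ^ 2 := fun j =>
    calc eLpNorm (fun x => g (n j) x / (n j).factorial) 2 μ ≤ eLpNorm (g (n j)) 2 μ :=
          eLpNorm_mono_enorm fun x => enorm_div_factorial_le _ _
      _ ≤ a ^ (n j - 2) * a ^ 2 := by
          rw [← pow_add, hn' j]
          simpa only [hn' j] using hL2 (n j - 2)
      _ ≤ 2⁻¹ ^ j * a ^ 2 := by gcongr ?_ * _; exact hdecay j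
  have hsum : ∑' j, eLpNorm (fun x => g (n j) x / (n j).factorial) 2 μ ≤ 2 * a ^ 2 :=
    (ENNReal.tsum_le_tsum hL2').trans (ENNReal.tsum_inv_two_pow_mul _).le
  have hfin : ∑' j, eLpNorm (fun x => g (n j) x / (n j).factorial) 2 μ ≠ ∞ :=
    (hsum.trans_lt (by finiteness)).ne
  refine ⟨memLp_tsum one_le_two hterm hfin, (eLpNorm_tsum_le one_le_two hterm hfin).trans hsum, ?_⟩
  filter_upwards [hpt] with x hx
  calc ‖∑' j, g (n j) x / (n j).factorial‖ₑ ≤ ∑' j, ‖g (n j) x / (n j).factorial‖ₑ :=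
        enorm_tsum_le_tsum_enorm
    _ ≤ ∑' j, 2⁻¹ ^ j * B x := ENNReal.tsum_le_tsum fun j => by
        refine (enorm_div_factorial_le _ _).trans ?_
        calc ‖g (n j) x‖ₑ ≤ a ^ (n j - 2) * B x := by simpa only [hn' j] using hx (n j - 2)
          _ ≤ 2⁻¹ ^ j * B x := by gcongr ?_ * _; exact hdecay j
    _ = 2 * B x := ENNReal.tsum_inv_two_pow_mul _

end DivFactorial

/-- Bounds on `p_η = sinh_η − η = Σ_{k≥1} η^{(2k+1)}/(2k+1)!` and
`r_η = cosh_η − id = Σ_{k≥1} η^{(2k)}/(2k)!` for a symmetric real Hilbert–Schmidt kernel `η`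
with `‖η‖_HS ≤ 1/2` and row bounds `‖η(x,·)‖₂ ≤ K φ(x)`: both are Hilbert–Schmidt with HS
norm `≤ C‖η‖_HS²` and with pointwise kernels bounded by `C K² φ(x) φ(y)` a.e. -/
theorem sinh_cosh_kernel_bounds :
    ∃ C : ℝ, 0 < C ∧
      ∀ (η : EuclideanSpace ℝ (Fin 3) × EuclideanSpace ℝ (Fin 3) → ℝ)
        (φ : EuclideanSpace ℝ (Fin 3) → ℝ) (K : ℝ)
        (kker : ℕ → EuclideanSpace ℝ (Fin 3) × EuclideanSpace ℝ (Fin 3) → ℝ),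
        MemLp η 2 volume →
        (eLpNorm η 2 volume).toReal ≤ 1 / 2 →
        (∀ x y, η (x, y) = η (y, x)) →
        (0 ≤ K) → (∀ x, 0 ≤ φ x) → (∃ Mb : ℝ, ∀ x, φ x ≤ Mb) →
        kker 1 = η →
        (∀ n, MemLp (kker n) 2 volume) →
        (∀ n x y, kker (n + 1) (x, y) = ∫ z, η (x, z) * kker n (z, y)) →
        (∀ x, eLpNorm (fun y => η (x, y)) 2 volume ≤ ENNReal.ofReal (K * φ x)) →
        let p : EuclideanSpace ℝ (Fin 3) × EuclideanSpace ℝ (Fin 3) → ℝ :=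
          fun z => ∑' j : ℕ, kker (2 * (j + 1) + 1) z / (Nat.factorial (2 * (j + 1) + 1))
        let r : EuclideanSpace ℝ (Fin 3) × EuclideanSpace ℝ (Fin 3) → ℝ :=
          fun z => ∑' j : ℕ, kker (2 * (j + 1)) z / (Nat.factorial (2 * (j + 1)))
        (MemLp p 2 volume ∧ MemLp r 2 volume ∧
          eLpNorm p 2 volume ≤ ENNReal.ofReal (C * ((eLpNorm η 2 volume).toReal) ^ 2) ∧
          eLpNorm r 2 volume ≤ ENNReal.ofReal (C * ((eLpNorm η 2 volume).toReal) ^ 2) ∧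
          (∀ᵐ z : EuclideanSpace ℝ (Fin 3) × EuclideanSpace ℝ (Fin 3) ∂volume,
            |p z| ≤ C * K ^ 2 * φ z.1 * φ z.2) ∧
          (∀ᵐ z : EuclideanSpace ℝ (Fin 3) × EuclideanSpace ℝ (Fin 3) ∂volume,
            |r z| ≤ C * K ^ 2 * φ z.1 * φ z.2)) := by
  refine ⟨2, two_pos, fun η φ K kker hη hηle hsymm hK hφ _ hk1 hk hrec hrow => ?_⟩
  intro p r
  rw [Measure.volume_eq_prod] at hη hηle hk ⊢
  set a := eLpNorm η 2 (volume.prod volume)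
  have hkm : ∀ n, AEStronglyMeasurable (kker n) (volume.prod volume) := fun n => (hk n).1
  have ha : a ≤ 2⁻¹ := by
    rwa [← ENNReal.toReal_le_toReal hη.2.ne (by finiteness), ENNReal.toReal_inv,
      ENNReal.toReal_ofNat, ← one_div]
  have hL2 : ∀ n, eLpNorm (kker (n + 2)) 2 (volume.prod volume) ≤ a ^ (n + 2) := fun n =>
    eLpNorm_iterate_le hkm hk1 hrec (n + 1)
  have hpt := ae_enorm_iterate_le_of_row_le hkm hk1 hrec hsymm hrow
  obtain ⟨hpL2, hpnorm, hpabs⟩ :=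
    tsum_div_factorial_bounds (fun j => 2 * (j + 1) + 1) (fun j => by omega) ha hkm hL2 hpt
  obtain ⟨hrL2, hrnorm, hrabs⟩ :=
    tsum_div_factorial_bounds (fun j => 2 * (j + 1)) (fun j => by omega) ha hkm hL2 hpt
  have hC : 2 * a ^ 2 = ENNReal.ofReal (2 * a.toReal ^ 2) := by
    rw [ENNReal.ofReal_mul zero_le_two, ENNReal.ofReal_pow ENNReal.toReal_nonneg,
      ENNReal.ofReal_toReal hη.2.ne, ENNReal.ofReal_ofNat]
  have habs : ∀ (z : EuclideanSpace ℝ (Fin 3) × EuclideanSpace ℝ (Fin 3)) (x : ℝ),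
      ‖x‖ₑ ≤ 2 * (ENNReal.ofReal (K * φ z.1) * ENNReal.ofReal (K * φ z.2)) →
        |x| ≤ 2 * K ^ 2 * φ z.1 * φ z.2 := by
    intro z x hx
    have := hφ z.1
    have := hφ z.2
    rw [← ENNReal.ofReal_mul (by positivity), ← ENNReal.ofReal_ofNat 2,
      ← ENNReal.ofReal_mul zero_le_two, Real.enorm_eq_ofReal_abs,
      ENNReal.ofReal_le_ofReal_iff (by positivity)] at hx
    exact hx.trans_eq (by ring)
  exact ⟨hpL2, hrL2, hC ▸ hpnorm, hC ▸ hrnorm, hpabs.mono fun z => habs z _,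
    hrabs.mono fun z => habs z _⟩
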